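/- Let (q_k, s_k) be a sequence in ℝ × (0,∞)∖{1,2} converging to (q,s) ∈ ℝ × (0,∞)∖{1,2}. Then ψ^{q_k,s_k}(i)^{1/|i|} → ψ^{q,s}(i)^{1/|i|} uniformly over all finite words i ∈ Σ_*. -/

import Mathlib

open MeasureTheory Filter Topology
open MeasureTheory Filter Topology

/-- The prefix of length `n` of an infinite word in the shift space `{1,…,N}^ℕ`. -/
def wordPrefix {N : ℕ} (x : ℕ → Fin N) (n : ℕ) : List (Fin N) :=
  List.ofFn fun k : Fin n => x k

/-- The measure of the cylinder set `[w]` as a real number. -/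
noncomputable def cylMass {N : ℕ} (μ : MeasureTheory.Measure (ℕ → Fin N)) (w : List (Fin N)) : ℝ :=
  (μ {x | wordPrefix x w.length = w}).toReal

/-- The Euclidean plane. -/
noncomputable abbrev E2 : Type := EuclideanSpace ℝ (Fin 2)

/-- The product `A_w = A_{w₁} ⋯ A_{wₙ}` of the invertible linear maps along a finite word. -/
noncomputable def wordProd {N : ℕ} (A : Fin N → (E2 ≃L[ℝ] E2)) (w : List (Fin N)) :
    E2 ≃L[ℝ] E2 :=
  (w.map A).prod

/-- `α₁(w) = ‖A_w‖`, the largest singular value (Euclidean operator norm). -/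
noncomputable def alpha1 {N : ℕ} (A : Fin N → (E2 ≃L[ℝ] E2)) (w : List (Fin N)) : ℝ :=
  ‖(wordProd A w : E2 →L[ℝ] E2)‖

/-- `α₂(w) = ‖A_w⁻¹‖⁻¹`, the smallest singular value. -/
noncomputable def alpha2 {N : ℕ} (A : Fin N → (E2 ≃L[ℝ] E2)) (w : List (Fin N)) : ℝ :=
  ‖((wordProd A w).symm : E2 →L[ℝ] E2)‖⁻¹

/-- `|det A_w|`. -/
noncomputable def detAbs {N : ℕ} (A : Fin N → (E2 ≃L[ℝ] E2)) (w : List (Fin N)) : ℝ :=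
  |LinearMap.det ((wordProd A w : E2 →L[ℝ] E2) : E2 →ₗ[ℝ] E2)|

/-- The singular value function `φ^s`. -/
noncomputable def phiSVF {N : ℕ} (A : Fin N → (E2 ≃L[ℝ] E2)) (s : ℝ) (w : List (Fin N)) : ℝ :=
  if s < 1 then alpha1 A w ^ s
  else if s < 2 then alpha1 A w * alpha2 A w ^ (s - 1)
  else detAbs A w ^ (s / 2)

/-- The tuple `A` is dominated: `α₂(w) ≤ C τ^{|w|} α₁(w)` for some `C > 0`, `0 < τ < 1`. -/
def Dominated {N : ℕ} (A : Fin N → (E2 ≃L[ℝ] E2)) : Prop :=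
  ∃ C > (0 : ℝ), ∃ t ∈ Set.Ioo (0 : ℝ) 1,
    ∀ w : List (Fin N), alpha2 A w ≤ C * t ^ w.length * alpha1 A w

/-- `μ` is quasi-Bernoulli: `C⁻¹ μ[u]μ[v] ≤ μ[uv] ≤ C μ[u]μ[v]`. -/
def QuasiBernoulli {N : ℕ} (μ : MeasureTheory.Measure (ℕ → Fin N)) : Prop :=
  ∃ C : ℝ, 1 ≤ C ∧ ∀ u v : List (Fin N),
    C⁻¹ * (cylMass μ u * cylMass μ v) ≤ cylMass μ (u ++ v) ∧
      cylMass μ (u ++ v) ≤ C * (cylMass μ u * cylMass μ v)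

/-- `μ` is fully supported: every cylinder has positive measure. -/
def FullySupported {N : ℕ} (μ : MeasureTheory.Measure (ℕ → Fin N)) : Prop :=
  ∀ w : List (Fin N), 0 < cylMass μ w

/-- The potential `ψ^{q,s}(w) = μ[w]^q φ^s(w)^{1-q}`. -/
noncomputable def psiPot {N : ℕ} (A : Fin N → (E2 ≃L[ℝ] E2))
    (μ : MeasureTheory.Measure (ℕ → Fin N)) (q s : ℝ) (w : List (Fin N)) : ℝ :=
  cylMass μ w ^ q * phiSVF A s w ^ (1 - q)

/-- The pressure `P(θ) = lim_n (1/n) log Σ_{|w|=n} θ(w)` (as a `limsup`). -/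
noncomputable def pressure {N : ℕ} (θ : List (Fin N) → ℝ) : ℝ :=
  Filter.limsup
    (fun n : ℕ => (n : ℝ)⁻¹ * Real.log (∑ w : Fin n → Fin N, θ (List.ofFn w))) atTop

/-!
With `λ_f(w) = |w|⁻¹ log f(w)` one has
`ψ^{q,s}(w)^{1/|w|} = exp (q λ_μ(w) + (1 - q) λ_{φ^s}(w))`, and away from `s ∈ {1, 2}` the rate
`λ_{φ^s}` is a linear form in `(λ_{α₁}, λ_{α₂}, λ_{|det|})` whose coefficients depend continuously
on `s`. Quasi-multiplicativity of `μ[·]`, `α₁`, `α₂` and `|det|` confines the four rates to a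
bounded set, so the points `(q_k, s_k, rates(w))` eventually lie in a fixed compact set on which
the formula is uniformly continuous; hence `(q_k, s_k) → (q, s)` gives uniform convergence in `w`.
-/

open Set Bornology

section UniformLimits

variable {ι α E γ : Type*} {p : Filter ι}

theorem TendstoUniformly.comp_continuousOn [PseudoMetricSpace E] [ProperSpace E]
    [UniformSpace γ] {F : ι → α → E} {f : α → E} {g : E → γ} {K V : Set E}
    (h : TendstoUniformly F f p) (hK : IsCompact K) (hfK : ∀ x, f x ∈ K) (hV : IsOpen V)
    (hKV : K ⊆ V) (hg : ContinuousOn g V) :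
    TendstoUniformly (fun i x => g (F i x)) (fun x => g (f x)) p := by
  obtain ⟨δ, hδ, hδV⟩ := hK.exists_cthickening_subset_open hV hKV
  have hg' : UniformContinuousOn g (Metric.cthickening δ K) :=
    hK.cthickening.uniformContinuousOn_of_continuous (hg.mono hδV)
  refine hg'.comp_tendstoUniformly_eventually ?_
    (fun x => Metric.self_subset_cthickening K (hfK x)) h
  filter_upwards [Metric.tendstoUniformly_iff.mp h δ hδ] with i hi x
  exact Metric.mem_cthickening_of_dist_le _ _ δ K (hfK x) (by rw [dist_comm]; exact (hi x).le)

theorem Filter.Tendsto.tendstoUniformly_prodMk [UniformSpace E] [UniformSpace γ] {a : ι → E}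
    {b : E} (ha : Tendsto a p (𝓝 b)) (f : α → γ) :
    TendstoUniformly (fun i x => (a i, f x)) (fun x => (b, f x)) p :=
  have hf : TendstoUniformly (fun _ : ι => f) f p :=
    fun _ hv => Eventually.of_forall fun _ _ => refl_mem_uniformity hv
  fun u hu => ((ha.tendstoUniformly_const.prodMk hf) u hu).diag_of_prod

end UniformLimits

section WordFunctions

variable {α : Type*}

theorem exists_pos_pow_length_le [Finite α] {f : List α → ℝ} {c : ℝ} (hc : 0 < c)
    (hnil : 1 ≤ f []) (hsingle : ∀ i, 0 < f [i])
    (hcons : ∀ i w, c * (f [i] * f w) ≤ f (i :: w)) :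
    ∃ r > 0, ∀ w, r ^ w.length ≤ f w := by
  obtain ⟨M, hM⟩ := Finite.bddAbove_range fun i => (c * f [i])⁻¹
  have hM1 : (0 : ℝ) < max M 1 := lt_max_of_lt_right one_pos
  refine ⟨(max M 1)⁻¹, inv_pos.mpr hM1, fun w => ?_⟩
  induction w with
  | nil => simpa using hnil
  | cons i w ih =>
    have hi : (max M 1)⁻¹ ≤ c * f [i] :=
      (inv_le_comm₀ hM1 (mul_pos hc (hsingle i))).mpr ((hM ⟨i, rfl⟩).trans (le_max_left _ _))
    calc (max M 1)⁻¹ ^ (i :: w).length = (max M 1)⁻¹ * (max M 1)⁻¹ ^ w.length := pow_succ' _ _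
      _ ≤ c * f [i] * f w := mul_le_mul hi ih (by positivity) (mul_pos hc (hsingle i)).le
      _ ≤ f (i :: w) := by rw [mul_assoc]; exact hcons i w

theorem exists_le_pow_length [Finite α] {f : List α → ℝ} (hnil : f [] ≤ 1)
    (hnonneg : ∀ w, 0 ≤ f w) (hcons : ∀ i w, f (i :: w) ≤ f [i] * f w) :
    ∃ R, ∀ w, f w ≤ R ^ w.length := by
  obtain ⟨M, hM⟩ := Finite.bddAbove_range fun i => f [i]
  refine ⟨M, fun w => ?_⟩
  induction w with
  | nil => simpa using hnil
  | cons i w ih =>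
    calc f (i :: w) ≤ f [i] * f w := hcons i w
      _ ≤ M * M ^ w.length :=
          mul_le_mul (hM ⟨i, rfl⟩) ih (hnonneg w) ((hnonneg [i]).trans (hM ⟨i, rfl⟩))
      _ = M ^ (i :: w).length := (pow_succ' _ _).symm

/-- Vanishes on the empty word (`0⁻¹ = 0`), consistently with `x ^ (0 : ℝ) = 1`. -/
noncomputable def logRate (f : List α → ℝ) (w : List α) : ℝ :=
  (w.length : ℝ)⁻¹ * Real.log (f w)

theorem rpow_inv_length_eq_exp_logRate {f : List α → ℝ} {w : List α} (hw : 0 < f w) :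
    f w ^ (w.length : ℝ)⁻¹ = Real.exp (logRate f w) := by
  rw [Real.rpow_def_of_pos hw, logRate, mul_comm]

theorem logRate_rpow_mul_rpow {f g : List α → ℝ} {w : List α} (hf : 0 < f w) (hg : 0 < g w)
    (a b : ℝ) :
    logRate (fun w => f w ^ a * g w ^ b) w = a * logRate f w + b * logRate g w := by
  simp only [logRate]
  rw [Real.log_mul (Real.rpow_pos_of_pos hf a).ne' (Real.rpow_pos_of_pos hg b).ne',
    Real.log_rpow hf, Real.log_rpow hg]
  ring

theorem isBounded_range_logRate {f : List α → ℝ} {r R : ℝ} (hr : 0 < r)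
    (hlow : ∀ w, r ^ w.length ≤ f w) (hup : ∀ w, f w ≤ R ^ w.length) :
    IsBounded (range (logRate f)) := by
  refine isBounded_iff_forall_norm_le.mpr ⟨max |Real.log r| |Real.log R|, ?_⟩
  rintro _ ⟨w, rfl⟩
  rcases w.length.eq_zero_or_pos with hw | hw
  · simp [logRate, hw]
  have hn : (0 : ℝ) < w.length := Nat.cast_pos.mpr hw
  have hlo : Real.log r ≤ logRate f w := by
    rw [logRate, le_inv_mul_iff₀ hn, ← Real.log_pow]
    exact Real.log_le_log (pow_pos hr _) (hlow w)
  have hhi : logRate f w ≤ Real.log R := by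
    rw [logRate, inv_mul_le_iff₀ hn, ← Real.log_pow]
    exact Real.log_le_log ((pow_pos hr _).trans_le (hlow w)) (hup w)
  rw [Real.norm_eq_abs, abs_le]
  constructor
  · linarith [neg_abs_le (Real.log r), le_max_left |Real.log r| |Real.log R|]
  · linarith [le_abs_self (Real.log R), le_max_right |Real.log r| |Real.log R|]

end WordFunctions

section SingularValues

variable {N : ℕ} (A : Fin N → (E2 ≃L[ℝ] E2))

theorem wordProd_nil : wordProd A [] = 1 := rfl

theorem wordProd_cons (i : Fin N) (w : List (Fin N)) :
    wordProd A (i :: w) = A i * wordProd A w :=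
  List.prod_cons

theorem wordProd_singleton (i : Fin N) : wordProd A [i] = A i :=
  mul_one _

theorem alpha1_pos (w : List (Fin N)) : 0 < alpha1 A w :=
  (wordProd A w).norm_pos

theorem alpha2_pos (w : List (Fin N)) : 0 < alpha2 A w :=
  inv_pos.mpr (wordProd A w).norm_symm_pos

theorem alpha2_le_alpha1 (w : List (Fin N)) : alpha2 A w ≤ alpha1 A w :=
  (inv_le_iff_one_le_mul₀ (wordProd A w).norm_symm_pos).mpr
    (wordProd A w).one_le_norm_mul_norm_symm

theorem alpha1_nil : alpha1 A [] = 1 :=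
  ContinuousLinearMap.norm_id

theorem alpha2_nil : alpha2 A [] = 1 := by
  rw [alpha2, wordProd_nil]
  exact inv_eq_one.mpr ContinuousLinearMap.norm_id

theorem alpha1_cons_le (i : Fin N) (w : List (Fin N)) :
    alpha1 A (i :: w) ≤ alpha1 A [i] * alpha1 A w := by
  rw [alpha1, alpha1, alpha1, wordProd_singleton, wordProd_cons,
    ContinuousLinearEquiv.toContinuousLinearMap_mul]
  exact norm_mul_le _ _

theorem alpha2_mul_le_alpha2_cons (i : Fin N) (w : List (Fin N)) :
    alpha2 A [i] * alpha2 A w ≤ alpha2 A (i :: w) := by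
  have hsymm : (A i * wordProd A w).symm = (wordProd A w).symm * (A i).symm :=
    mul_inv_rev _ _
  rw [alpha2, alpha2, alpha2, wordProd_singleton, wordProd_cons, ← mul_inv, mul_comm]
  refine inv_anti₀ (A i * wordProd A w).norm_symm_pos ?_
  rw [hsymm, ContinuousLinearEquiv.toContinuousLinearMap_mul]
  exact norm_mul_le _ _

theorem detAbs_nil : detAbs A [] = 1 := by
  simp [detAbs, wordProd_nil]

theorem detAbs_cons (i : Fin N) (w : List (Fin N)) :
    detAbs A (i :: w) = detAbs A [i] * detAbs A w := by
  rw [detAbs, detAbs, detAbs, wordProd_singleton, wordProd_cons, ← abs_mul, ← LinearMap.det_comp]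
  rfl

theorem detAbs_pos (w : List (Fin N)) : 0 < detAbs A w :=
  abs_pos.mpr (LinearEquiv.isUnit_det' (wordProd A w).toLinearEquiv).ne_zero

end SingularValues

section Rates

variable {N : ℕ} (A : Fin N → (E2 ≃L[ℝ] E2)) (μ : Measure (ℕ → Fin N))

theorem cylMass_nil [IsProbabilityMeasure μ] : cylMass μ [] = 1 := by
  simp [cylMass, wordPrefix]

theorem cylMass_le_one [IsProbabilityMeasure μ] (w : List (Fin N)) : cylMass μ w ≤ 1 :=
  ENNReal.toReal_le_of_le_ofReal zero_le_one (by simpa using prob_le_one)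

theorem isBounded_range_logRate_cylMass [IsProbabilityMeasure μ] (hqb : QuasiBernoulli μ)
    (hfs : FullySupported μ) : IsBounded (range (logRate (cylMass μ))) := by
  obtain ⟨C, hC, hqb⟩ := hqb
  obtain ⟨r, hr, hlow⟩ := exists_pos_pow_length_le (inv_pos.mpr (zero_lt_one.trans_le hC))
    (cylMass_nil μ).ge (fun i => hfs [i]) (fun i w => (hqb [i] w).1)
  exact isBounded_range_logRate (R := 1) hr hlow fun w =>
    (cylMass_le_one μ w).trans_eq (one_pow _).symm

theorem isBounded_range_logRate_alpha :
    IsBounded (range (logRate (alpha1 A))) ∧ IsBounded (range (logRate (alpha2 A))) := by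
  obtain ⟨r, hr, hlow⟩ := exists_pos_pow_length_le one_pos (alpha2_nil A).ge
    (fun i => alpha2_pos A [i]) (fun i w => (one_mul _).trans_le (alpha2_mul_le_alpha2_cons A i w))
  obtain ⟨R, hup⟩ := exists_le_pow_length (alpha1_nil A).le (fun w => (alpha1_pos A w).le)
    (alpha1_cons_le A)
  exact ⟨isBounded_range_logRate hr (fun w => (hlow w).trans (alpha2_le_alpha1 A w)) hup,
    isBounded_range_logRate hr hlow (fun w => (alpha2_le_alpha1 A w).trans (hup w))⟩

theorem isBounded_range_logRate_detAbs : IsBounded (range (logRate (detAbs A))) := by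
  obtain ⟨r, hr, hlow⟩ := exists_pos_pow_length_le one_pos (detAbs_nil A).ge
    (fun i => detAbs_pos A [i]) (fun i w => (one_mul _).trans_le (detAbs_cons A i w).ge)
  obtain ⟨R, hup⟩ := exists_le_pow_length (detAbs_nil A).le (fun w => (detAbs_pos A w).le)
    (fun i w => (detAbs_cons A i w).le)
  exact isBounded_range_logRate hr hlow hup

noncomputable def logRates (w : List (Fin N)) : ℝ × ℝ × ℝ × ℝ :=
  (logRate (cylMass μ) w, logRate (alpha1 A) w, logRate (alpha2 A) w, logRate (detAbs A) w)

theorem isBounded_range_logRates [IsProbabilityMeasure μ] (hqb : QuasiBernoulli μ)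
    (hfs : FullySupported μ) : IsBounded (range (logRates A μ)) := by
  obtain ⟨h1, h2⟩ := isBounded_range_logRate_alpha A
  refine ((isBounded_range_logRate_cylMass μ hqb hfs).prod
    (h1.prod (h2.prod (isBounded_range_logRate_detAbs A)))).subset ?_
  rintro _ ⟨w, rfl⟩
  exact ⟨mem_range_self w, mem_range_self w, mem_range_self w, mem_range_self w⟩

end Rates

section Potential

/-- `log φ^s` as a function of `(log α₁, log α₂, log |det|)`. -/
noncomputable def svfRate (s : ℝ) (x : ℝ × ℝ × ℝ) : ℝ :=
  if s < 1 then s * x.1 else if s < 2 then x.1 + (s - 1) * x.2.1 else s / 2 * x.2.2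

noncomputable def psiRate (q s : ℝ) (x : ℝ × ℝ × ℝ × ℝ) : ℝ :=
  q * x.1 + (1 - q) * svfRate s x.2

variable {N : ℕ} (A : Fin N → (E2 ≃L[ℝ] E2)) (μ : Measure (ℕ → Fin N))

theorem phiSVF_pos (s : ℝ) (w : List (Fin N)) : 0 < phiSVF A s w := by
  unfold phiSVF
  split_ifs
  · exact Real.rpow_pos_of_pos (alpha1_pos A w) s
  · exact mul_pos (alpha1_pos A w) (Real.rpow_pos_of_pos (alpha2_pos A w) _)
  · exact Real.rpow_pos_of_pos (detAbs_pos A w) _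

theorem logRate_phiSVF (s : ℝ) (w : List (Fin N)) :
    logRate (phiSVF A s) w
      = svfRate s (logRate (alpha1 A) w, logRate (alpha2 A) w, logRate (detAbs A) w) := by
  have h1 := alpha1_pos A w
  have h2 := alpha2_pos A w
  simp only [logRate, phiSVF, svfRate]
  split_ifs
  · rw [Real.log_rpow h1]; ring
  · rw [Real.log_mul h1.ne' (Real.rpow_pos_of_pos h2 _).ne', Real.log_rpow h2]; ring
  · rw [Real.log_rpow (detAbs_pos A w)]; ring

theorem psiPot_rpow_inv_length (hfs : FullySupported μ) (q s : ℝ) (w : List (Fin N)) :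
    psiPot A μ q s w ^ (w.length : ℝ)⁻¹ = Real.exp (psiRate q s (logRates A μ w)) := by
  have hψ : 0 < psiPot A μ q s w :=
    mul_pos (Real.rpow_pos_of_pos (hfs w) q) (Real.rpow_pos_of_pos (phiSVF_pos A s w) _)
  rw [rpow_inv_length_eq_exp_logRate hψ, psiRate, logRates, ← logRate_phiSVF]
  exact congrArg Real.exp (logRate_rpow_mul_rpow (hfs w) (phiSVF_pos A s w) q (1 - q))

theorem continuousAt_svfRate {s : ℝ} (hs1 : s ≠ 1) (hs2 : s ≠ 2) (x : ℝ × ℝ × ℝ) :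
    ContinuousAt (fun p : ℝ × ℝ × ℝ × ℝ => svfRate p.1 p.2) (s, x) := by
  have hfst : Tendsto Prod.fst (𝓝 (s, x)) (𝓝 s) := continuousAt_fst
  rcases hs1.lt_or_gt with h1 | h1
  · refine ContinuousAt.congr (f := fun p => p.1 * p.2.1) (by fun_prop) ?_
    filter_upwards [hfst.eventually (gt_mem_nhds h1)] with p hp
    simp [svfRate, hp]
  rcases hs2.lt_or_gt with h2 | h2
  · refine ContinuousAt.congr (f := fun p => p.2.1 + (p.1 - 1) * p.2.2.1) (by fun_prop) ?_
    filter_upwards [hfst.eventually (lt_mem_nhds h1), hfst.eventually (gt_mem_nhds h2)]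
      with p hp1 hp2
    simp [svfRate, hp1.not_gt, hp2]
  · refine ContinuousAt.congr (f := fun p => p.1 / 2 * p.2.2.2) (by fun_prop) ?_
    filter_upwards [hfst.eventually (lt_mem_nhds h1), hfst.eventually (lt_mem_nhds h2)]
      with p hp1 hp2
    simp [svfRate, hp1.not_gt, hp2.not_gt]

theorem continuousOn_psiRate :
    ContinuousOn (fun z : (ℝ × ℝ) × ℝ × ℝ × ℝ × ℝ => psiRate z.1.1 z.1.2 z.2)
      {z | z.1.2 ≠ 1 ∧ z.1.2 ≠ 2} := by
  refine continuousOn_of_forall_continuousAt fun z ⟨hs1, hs2⟩ => ?_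
  have hsvf : ContinuousAt (fun z : (ℝ × ℝ) × ℝ × ℝ × ℝ × ℝ => svfRate z.1.2 z.2.2) z :=
    (continuousAt_svfRate hs1 hs2 z.2.2).comp
      (f := fun z : (ℝ × ℝ) × ℝ × ℝ × ℝ × ℝ => (z.1.2, z.2.2)) (by fun_prop)
  unfold psiRate
  fun_prop

end Potential

theorem stmt_16_general {N : ℕ} (A : Fin N → (E2 ≃L[ℝ] E2))
    (μ : Measure (ℕ → Fin N)) [IsProbabilityMeasure μ]
    (hqb : QuasiBernoulli μ) (hfs : FullySupported μ)
    (qk sk : ℕ → ℝ) (q s : ℝ)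
    (hs : 0 < s ∧ s ≠ 1 ∧ s ≠ 2)
    (hconv : Tendsto (fun k => (qk k, sk k)) atTop (𝓝 (q, s))) :
    TendstoUniformly
      (fun k (w : List (Fin N)) => psiPot A μ (qk k) (sk k) w ^ ((w.length : ℝ)⁻¹))
      (fun w => psiPot A μ q s w ^ ((w.length : ℝ)⁻¹))
      atTop := by
  obtain ⟨-, hs1, hs2⟩ := hs
  set K := {(q, s)} ×ˢ closure (range (logRates A μ))
  have hK : IsCompact K :=
    isCompact_singleton.prod (isBounded_range_logRates A μ hqb hfs).isCompact_closure
  have hV : IsOpen {z : (ℝ × ℝ) × ℝ × ℝ × ℝ × ℝ | z.1.2 ≠ 1 ∧ z.1.2 ≠ 2} :=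
    (isOpen_ne_fun (by fun_prop) continuous_const).inter
      (isOpen_ne_fun (by fun_prop) continuous_const)
  have hKV : K ⊆ {z | z.1.2 ≠ 1 ∧ z.1.2 ≠ 2} := by
    rintro ⟨_, _⟩ ⟨hqs : _ = (q, s), -⟩
    subst hqs
    exact ⟨hs1, hs2⟩
  simp only [psiPot_rpow_inv_length A μ hfs]
  exact (hconv.tendstoUniformly_prodMk (logRates A μ)).comp_continuousOn hK
    (fun w => ⟨rfl, subset_closure (mem_range_self w)⟩) hV hKV
    (Real.continuous_exp.comp_continuousOn continuousOn_psiRate)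

/-- If `(q_k, s_k) ∈ ℝ × (0,∞)∖{1,2}` converges to
`(q,s) ∈ ℝ × (0,∞)∖{1,2}`, then `ψ^{q_k,s_k}(w)^{1/|w|} → ψ^{q,s}(w)^{1/|w|}` uniformly over
all finite words `w`. -/
theorem stmt_16 {N : ℕ} (A : Fin N → (E2 ≃L[ℝ] E2))
    (hA : ∀ i : Fin N, alpha1 A [i] < 1) (hdom : Dominated A)
    (μ : Measure (ℕ → Fin N)) [IsProbabilityMeasure μ]
    (hqb : QuasiBernoulli μ) (hfs : FullySupported μ)
    (qk sk : ℕ → ℝ) (q s : ℝ)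
    (hsk : ∀ k, 0 < sk k ∧ sk k ≠ 1 ∧ sk k ≠ 2)
    (hs : 0 < s ∧ s ≠ 1 ∧ s ≠ 2)
    (hconv : Tendsto (fun k => (qk k, sk k)) atTop (𝓝 (q, s))) :
    TendstoUniformly
      (fun k (w : List (Fin N)) => psiPot A μ (qk k) (sk k) w ^ ((w.length : ℝ)⁻¹))
      (fun w => psiPot A μ q s w ^ ((w.length : ℝ)⁻¹))
      atTop :=
  stmt_16_general A μ hqb hfs qk sk q s hs hconv
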